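/- Let I be a monomial ideal generated in degree d and k ≥ 1 such that for each 1 ≤ w ≤ k−1 and all a,b ∈ 𝒢(I^w) there is a path in G_{I^w}^{a,b} connecting a and b. Let u = u₁⋯u_k and v = v₁⋯v_k be minimal generators of I^k with u_i, v_i ∈ 𝒢(I). If u and v lie in distinct connected components of G_{I^k}^{u,v}, then for every pair of nonempty subsets A, B of {1,…,k} with |A| + |B| = k, the monomial ∏_{i∈A} u_i · ∏_{j∈B} v_j does not divide lcm(u,v). -/
import Mathlib

open Finset

/-- A monomial in `n` variables, given by its exponent vector. -/
abbrev Mon (n : ℕ) := Fin n → ℕ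

/-- Degree of a monomial. -/
def mdeg {n : ℕ} (u : Mon n) : ℕ := ∑ i, u i

/-- Divisibility of monomials. -/
def mdvd {n : ℕ} (u v : Mon n) : Prop := ∀ i, u i ≤ v i

/-- Least common multiple of monomials. -/
def mlcm {n : ℕ} (u v : Mon n) : Mon n := fun i => max (u i) (v i)

/-- Products of `k` generators taken from `S`, i.e. the (not necessarily minimal)
monomial generators of `I^k` where `I` is generated by `S`.
(Products of monomials correspond to sums of exponent vectors.) -/
def powGen {n : ℕ} (S : Finset (Mon n)) (k : ℕ) : Set (Mon n) :=
  { m | ∃ f : Fin k → Mon n, (∀ i, f i ∈ S) ∧ m = ∑ i, f i }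

/-- The minimal monomial generating set `𝒢(I^k)`. -/
def minGen {n : ℕ} (S : Finset (Mon n)) (k : ℕ) : Set (Mon n) :=
  { m | m ∈ powGen S k ∧ ∀ m' ∈ powGen S k, mdvd m' m → m' = m }

/-- Adjacency in the graph `G_{I^k}^{u,v}`: both endpoints are minimal generators of `I^k`
dividing `lcm(u,v)`, and the degree of their lcm is `d·k + 1`. -/
def adj {n : ℕ} (S : Finset (Mon n)) (d k : ℕ) (u v a b : Mon n) : Prop :=
  a ∈ minGen S k ∧ b ∈ minGen S k ∧
    mdvd a (mlcm u v) ∧ mdvd b (mlcm u v) ∧ mdeg (mlcm a b) = d * k + 1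

/-- `a` and `b` are connected by a path in `G_{I^k}^{u,v}`. -/
def connectedIn {n : ℕ} (S : Finset (Mon n)) (d k : ℕ) (u v a b : Mon n) : Prop :=
  Relation.ReflTransGen (adj S d k u v) a b

lemma mdeg_add {n : ℕ} (a b : Mon n) : mdeg (a + b) = mdeg a + mdeg b := by
  simp [mdeg, Finset.sum_add_distrib]

lemma mdeg_sum {n m : ℕ} (f : Fin m → Mon n) : mdeg (∑ i, f i) = ∑ i, mdeg (f i) := by
  simp [mdeg]
  exact Finset.sum_comm

lemma mdeg_powGen {n k d : ℕ} {S : Finset (Mon n)} (hS : ∀ m ∈ S, mdeg m = d)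
    {m : Mon n} (hm : m ∈ powGen S k) : mdeg m = d * k := by
  obtain ⟨f, hf, rfl⟩ := hm
  rw [mdeg_sum]
  simp [hS _ (hf _), mul_comm]

lemma eq_of_mdvd_deg {n : ℕ} {a b : Mon n} (h : mdvd a b) (hd : mdeg b ≤ mdeg a) : a = b := by
  funext i
  by_contra hne
  have hlt : a i < b i := lt_of_le_of_ne (h i) hne
  have : mdeg a < mdeg b := Finset.sum_lt_sum (fun j _ => h j) ⟨i, Finset.mem_univ i, hlt⟩
  omega

lemma powGen_minGen {n k d : ℕ} {S : Finset (Mon n)} (hS : ∀ m ∈ S, mdeg m = d)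
    {m : Mon n} (hm : m ∈ powGen S k) : m ∈ minGen S k := by
  refine ⟨hm, fun m' hm' hd => eq_of_mdvd_deg hd ?_⟩
  rw [mdeg_powGen hS hm, mdeg_powGen hS hm']

lemma add_powGen {n k₁ k₂ : ℕ} {S : Finset (Mon n)} {a b : Mon n}
    (ha : a ∈ powGen S k₁) (hb : b ∈ powGen S k₂) : a + b ∈ powGen S (k₁ + k₂) := by
  obtain ⟨f, hf, rfl⟩ := ha
  obtain ⟨g, hg, rfl⟩ := hb
  refine ⟨Fin.append f g, fun i => ?_, ?_⟩
  · refine Fin.addCases (fun j => ?_) (fun j => ?_) i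
    · rw [Fin.append_left]; exact hf j
    · rw [Fin.append_right]; exact hg j
  · rw [Fin.sum_univ_add]
    simp

lemma sum_mem_powGen {n k : ℕ} {S : Finset (Mon n)} (A : Finset (Fin k)) (uu : Fin k → Mon n)
    (huS : ∀ i, uu i ∈ S) : (∑ i ∈ A, uu i) ∈ powGen S A.card := by
  refine ⟨fun j => uu (A.equivFin.symm j), fun j => huS _, ?_⟩
  have h1 := Equiv.sum_comp A.equivFin.symm (fun a : A => uu ↑a)
  exact (Finset.sum_coe_sort A uu).symm.trans h1.symm

lemma mlcm_add_left {n : ℕ} (c a b : Mon n) : mlcm (c + a) (c + b) = c + mlcm a b := by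
  funext i
  simp only [mlcm, Pi.add_apply]
  exact max_add_add_left (c i) (a i) (b i)

lemma connect_lift {n k d : ℕ} {S : Finset (Mon n)} (hS : ∀ m ∈ S, mdeg m = d)
    (hind : ∀ w, 1 ≤ w → w ≤ k - 1 →
      ∀ a ∈ minGen S w, ∀ b ∈ minGen S w, connectedIn S d w a b a b)
    (u v : Mon n) {w₁ w₂ : ℕ} (h1 : 1 ≤ w₁) (h2 : 1 ≤ w₂) (hw : w₁ + w₂ = k)
    {c p q : Mon n} (hc : c ∈ powGen S w₁) (hp : p ∈ powGen S w₂) (hq : q ∈ powGen S w₂)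
    (hcp : mdvd (c + p) (mlcm u v)) (hcq : mdvd (c + q) (mlcm u v)) :
    connectedIn S d k u v (c + p) (c + q) := by
  have hw2 : w₂ ≤ k - 1 := by omega
  have hpath := hind w₂ h2 hw2 p (powGen_minGen hS hp) q (powGen_minGen hS hq)
  have hL : mdvd (c + mlcm p q) (mlcm u v) := by
    intro i
    have hi1 := hcp i
    have hi2 := hcq i
    simp only [mlcm, Pi.add_apply] at hi1 hi2 ⊢
    omega
  have step : ∀ z z', adj S d w₂ p q z z' → adj S d k u v (c + z) (c + z') := by
    rintro z z' ⟨hz, hz', hzl, hz'l, hdeg⟩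
    have hcz : c + z ∈ powGen S k := by rw [← hw]; exact add_powGen hc hz.1
    have hcz' : c + z' ∈ powGen S k := by rw [← hw]; exact add_powGen hc hz'.1
    refine ⟨powGen_minGen hS hcz, powGen_minGen hS hcz', ?_, ?_, ?_⟩
    · exact fun i => le_trans (Nat.add_le_add_left (hzl i) _) (hL i)
    · exact fun i => le_trans (Nat.add_le_add_left (hz'l i) _) (hL i)
    · rw [mlcm_add_left, mdeg_add, hdeg, mdeg_powGen hS hc, ← hw]
      ring
  have key : ∀ z, Relation.ReflTransGen (adj S d w₂ p q) p z →
      connectedIn S d k u v (c + p) (c + z) := by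
    intro z hz
    induction hz with
    | refl => exact Relation.ReflTransGen.refl
    | tail hab hstep ih => exact ih.tail (step _ _ hstep)
  exact key q hpath

theorem stmt1 {n k : ℕ} (d : ℕ) (hk : 1 ≤ k) (S : Finset (Mon n))
    (hS : ∀ m ∈ S, mdeg m = d)
    (hind : ∀ w, 1 ≤ w → w ≤ k - 1 →
      ∀ a ∈ minGen S w, ∀ b ∈ minGen S w, connectedIn S d w a b a b)
    (u v : Mon n) (uu vv : Fin k → Mon n)
    (huS : ∀ i, uu i ∈ S) (hvS : ∀ i, vv i ∈ S)
    (hue : u = ∑ i, uu i) (hve : v = ∑ i, vv i)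
    (hum : u ∈ minGen S k) (hvm : v ∈ minGen S k)
    (hdisc : ¬ connectedIn S d k u v u v) :
    ∀ A B : Finset (Fin k), A.Nonempty → B.Nonempty → A.card + B.card = k →
      ¬ mdvd ((∑ i ∈ A, uu i) + (∑ j ∈ B, vv j)) (mlcm u v) := by
  intro A B hA hB hAB hdvd
  apply hdisc
  have hAc : Aᶜ.card = B.card := by
    rw [Finset.card_compl, Fintype.card_fin]; omega
  have hBc : Bᶜ.card = A.card := by
    rw [Finset.card_compl, Fintype.card_fin]; omega
  have hu' : (∑ i ∈ A, uu i) + (∑ i ∈ Aᶜ, uu i) = u := by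
    rw [hue, Finset.sum_add_sum_compl]
  have hv' : (∑ j ∈ B, vv j) + (∑ j ∈ Bᶜ, vv j) = v := by
    rw [hve, Finset.sum_add_sum_compl]
  have hcA := sum_mem_powGen A uu huS
  have hpAc : (∑ i ∈ Aᶜ, uu i) ∈ powGen S B.card := hAc ▸ sum_mem_powGen Aᶜ uu huS
  have hqB := sum_mem_powGen B vv hvS
  have hqBc : (∑ j ∈ Bᶜ, vv j) ∈ powGen S A.card := hBc ▸ sum_mem_powGen Bᶜ vv hvS
  have huL : mdvd u (mlcm u v) := fun i => le_max_left _ _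
  have hvL : mdvd v (mlcm u v) := fun i => le_max_right _ _
  have hA1 : 1 ≤ A.card := hA.card_pos
  have hB1 : 1 ≤ B.card := hB.card_pos
  have h1 : connectedIn S d k u v u ((∑ i ∈ A, uu i) + (∑ j ∈ B, vv j)) := by
    have h := connect_lift hS hind u v hA1 hB1 hAB hcA hpAc hqB
      (by rw [hu']; exact huL) hdvd
    rwa [hu'] at h
  have h2 : connectedIn S d k u v ((∑ i ∈ A, uu i) + (∑ j ∈ B, vv j)) v := by
    have h := connect_lift hS hind u v hB1 hA1 (by omega) hqB hcA hqBc
      (by rw [add_comm (∑ j ∈ B, vv j) (∑ i ∈ A, uu i)]; exact hdvd)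
      (by rw [hv']; exact hvL)
    rw [hv', add_comm (∑ j ∈ B, vv j) (∑ i ∈ A, uu i)] at h
    exact h
  exact h1.trans h2
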